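/- arXiv:1711.01443 — 2 statements merged into one kernel-verified Lean document; each statement's English description precedes it below -/
import Mathlib

section
/- Necessary condition for segment intersection (Theorem 4 / thcnip): if the closed segments [(x₁,y₁),(x₂,y₂)] and [(x₁',y₁'),(x₂',y₂')] in ℝ² have a common point, then ((y₂−y₁)x₁' − (x₂−x₁)y₁' − x₁y₂ + y₁x₂) · ((y₂−y₁)x₂' − (x₂−x₁)y₂' − x₁y₂ + y₁x₂) ≤ 0. -/
/-- Necessary condition for segment intersection (Theorem 4): if the closed
segments `[(x₁,y₁),(x₂,y₂)]` and `[(x₁',y₁'),(x₂',y₂')]` in `ℝ²` have a common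
point, then the two endpoints of the second segment lie on weakly opposite sides
of the line through the first segment. -/
theorem segment_intersection_necessary
    (x₁ y₁ x₂ y₂ x₁' y₁' x₂' y₂' : ℝ)
    (h : (segment ℝ ((x₁, y₁) : ℝ × ℝ) (x₂, y₂) ∩
          segment ℝ ((x₁', y₁') : ℝ × ℝ) (x₂', y₂')).Nonempty) :
    ((y₂ - y₁) * x₁' - (x₂ - x₁) * y₁' - x₁ * y₂ + y₁ * x₂) *
      ((y₂ - y₁) * x₂' - (x₂ - x₁) * y₂' - x₁ * y₂ + y₁ * x₂) ≤ 0 := by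
  obtain ⟨p, hp1, hp2⟩ := h
  obtain ⟨a, b, ha, hb, hab, hp⟩ := hp1
  obtain ⟨c, d, hc, hd, hcd, hq⟩ := hp2
  have h1 : a * x₁ + b * x₂ = c * x₁' + d * x₂' := by
    have := congrArg Prod.fst (hp.trans hq.symm)
    simpa [Prod.smul_def] using this
  have h2 : a * y₁ + b * y₂ = c * y₁' + d * y₂' := by
    have := congrArg Prod.snd (hp.trans hq.symm)
    simpa [Prod.smul_def] using this
  set A := (y₂ - y₁) * x₁' - (x₂ - x₁) * y₁' - x₁ * y₂ + y₁ * x₂ with hA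
  set B := (y₂ - y₁) * x₂' - (x₂ - x₁) * y₂' - x₁ * y₂ + y₁ * x₂ with hB
  have key : c * A + d * B = 0 := by
    have : c * A + d * B =
        (y₂ - y₁) * (c * x₁' + d * x₂') - (x₂ - x₁) * (c * y₁' + d * y₂')
          - (c + d) * (x₁ * y₂ - y₁ * x₂) := by rw [hA, hB]; ring
    rw [this, ← h1, ← h2, hcd]
    linear_combination (x₁ * y₂ - y₁ * x₂) * hab
  nlinarith [mul_nonneg hc (sq_nonneg A), mul_nonneg hd (sq_nonneg B),
    mul_eq_zero_of_right A key, mul_eq_zero_of_right B key, hcd]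
end

section
/- Necessary and sufficient condition for segment intersection (Theorem 5 / thcnsip): let p₁ = (x₁,y₁), p₂ = (x₂,y₂), q₁ = (x₁',y₁'), q₂ = (x₂',y₂') be points of ℝ² with p₁ ≠ p₂, q₁ ≠ q₂, and such that the four points p₁, p₂, q₁, q₂ are not all collinear. Then the closed segments [p₁,p₂] and [q₁,q₂] have a common point if and only if both ((y₂−y₁)x₁' − (x₂−x₁)y₁' − x₁y₂ + y₁x₂) · ((y₂−y₁)x₂' − (x₂−x₁)y₂' − x₁y₂ + y₁x₂) ≤ 0 and ((y₂'−y₁')x₁ − (x₂'−x₁')y₁ − x₁'y₂' + y₁'x₂') · ((y₂'−y₁')x₂ − (x₂'−x₁')y₂ − x₁'y₂' + y₁'x₂') ≤ 0. -/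
/-!
The line equation `f` of `p₁p₂` is affine, so it maps `[q₁, q₂]` onto the interval between
`f q₁` and `f q₂`: the segment `[q₁, q₂]` meets the line `p₁p₂` iff `f q₁ * f q₂ ≤ 0`, and
symmetrically. This gives necessity at once. Conversely it yields a point `z ∈ [q₁, q₂]` on the
line `p₁p₂` and a point `w ∈ [p₁, p₂]` on the line `q₁q₂`; both lie on both lines, so if `z ≠ w`
the two lines coincide and the four endpoints are collinear.
-/

open Module

section Collinear

variable {k V P : Type*} [Field k] [AddCommGroup V] [Module k V] [AddTorsor V P]

theorem Collinear.of_subset_affineSpan {s t : Set P} (ht : Collinear k t)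
    (hst : s ⊆ affineSpan k t) : Collinear k s := by
  have hle : vectorSpan k s ≤ vectorSpan k t :=
    (vectorSpan_mono k hst).trans_eq (direction_affineSpan k t)
  exact (Submodule.rank_mono hle).trans ht

theorem AffineMap.collinear_preimage_zero [FiniteDimensional k V] (hV : finrank k V = 2)
    (f : P →ᵃ[k] k) (hf : f.linear ≠ 0) : Collinear k (f ⁻¹' {0}) := by
  have hle : vectorSpan k (f ⁻¹' {0}) ≤ LinearMap.ker f.linear := by
    rw [vectorSpan_def, Submodule.span_le]
    rintro _ ⟨a, (ha : f a = 0), b, (hb : f b = 0), rfl⟩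
    show f.linear (a -ᵥ b) = 0
    rw [f.linearMap_vsub, ha, hb, vsub_self]
  have hker : finrank k (LinearMap.ker f.linear) = 1 := by
    have := Module.Dual.finrank_ker_add_one_of_ne_zero hf
    omega
  rw [collinear_iff_finrank_le_one]
  exact hker ▸ Submodule.finrank_mono hle

end Collinear

theorem AffineMap.exists_mem_segment_eq_zero_iff {E : Type*} [AddCommGroup E] [Module ℝ E]
    (f : E →ᵃ[ℝ] ℝ) (a b : E) : (∃ z ∈ segment ℝ a b, f z = 0) ↔ f a * f b ≤ 0 := by
  rw [← Set.mem_image, image_segment, segment_eq_uIcc, Set.mem_uIcc, mul_nonpos_iff]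
  tauto

def lineEquation (p q : ℝ × ℝ) : ℝ × ℝ →ᵃ[ℝ] ℝ where
  toFun z := (q.2 - p.2) * z.1 - (q.1 - p.1) * z.2 - p.1 * q.2 + p.2 * q.1
  linear := (q.2 - p.2) • LinearMap.fst ℝ ℝ ℝ - (q.1 - p.1) • LinearMap.snd ℝ ℝ ℝ
  map_vadd' z v := by
    simp only [vadd_eq_add, Prod.fst_add, Prod.snd_add, LinearMap.sub_apply, LinearMap.smul_apply,
      LinearMap.fst_apply, LinearMap.snd_apply, smul_eq_mul]
    ring

namespace lineEquation

variable {p q : ℝ × ℝ}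

theorem apply_left : lineEquation p q p = 0 := by
  simp only [lineEquation, AffineMap.coe_mk]; ring

theorem apply_right : lineEquation p q q = 0 := by
  simp only [lineEquation, AffineMap.coe_mk]; ring

theorem segment_subset_preimage_zero : segment ℝ p q ⊆ lineEquation p q ⁻¹' {0} :=
  ((convex_singleton 0).affine_preimage _).segment_subset apply_left apply_right

theorem linear_ne_zero (h : p ≠ q) : (lineEquation p q).linear ≠ 0 := by
  intro h0
  have h₁ := LinearMap.congr_fun h0 (1, 0)
  have h₂ := LinearMap.congr_fun h0 (0, 1)
  simp only [lineEquation, LinearMap.sub_apply, LinearMap.smul_apply, LinearMap.fst_apply,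
    LinearMap.snd_apply, LinearMap.zero_apply, smul_eq_mul] at h₁ h₂
  exact h (Prod.ext (by linarith) (by linarith))

theorem collinear_preimage_zero (h : p ≠ q) : Collinear ℝ (lineEquation p q ⁻¹' {0}) :=
  (lineEquation p q).collinear_preimage_zero (by simp) (linear_ne_zero h)

end lineEquation

theorem segment_inter_segment_nonempty_iff {p₁ p₂ q₁ q₂ : ℝ × ℝ} (hp : p₁ ≠ p₂) (hq : q₁ ≠ q₂)
    (hcol : ¬ Collinear ℝ ({p₁, p₂, q₁, q₂} : Set (ℝ × ℝ))) :
    (segment ℝ p₁ p₂ ∩ segment ℝ q₁ q₂).Nonempty ↔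
      lineEquation p₁ p₂ q₁ * lineEquation p₁ p₂ q₂ ≤ 0 ∧
        lineEquation q₁ q₂ p₁ * lineEquation q₁ q₂ p₂ ≤ 0 := by
  have hfp := lineEquation.segment_subset_preimage_zero (p := p₁) (q := p₂)
  have hgq := lineEquation.segment_subset_preimage_zero (p := q₁) (q := q₂)
  rw [← AffineMap.exists_mem_segment_eq_zero_iff, ← AffineMap.exists_mem_segment_eq_zero_iff]
  constructor
  · rintro ⟨z, hzp, hzq⟩
    exact ⟨⟨z, hzq, hfp hzp⟩, ⟨z, hzp, hgq hzq⟩⟩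
  · rintro ⟨⟨z, hzq, hfz⟩, ⟨w, hwp, hgw⟩⟩
    suffices z = w from ⟨z, this ▸ hwp, hzq⟩
    by_contra hzw
    have hf := lineEquation.collinear_preimage_zero hp
    have hg := lineEquation.collinear_preimage_zero hq
    refine hcol ((collinear_pair ℝ z w).of_subset_affineSpan ?_)
    simp only [Set.insert_subset_iff, Set.singleton_subset_iff]
    exact ⟨hf.mem_affineSpan_of_mem_of_ne hfz (hfp hwp) lineEquation.apply_left hzw,
      hf.mem_affineSpan_of_mem_of_ne hfz (hfp hwp) lineEquation.apply_right hzw,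
      hg.mem_affineSpan_of_mem_of_ne (hgq hzq) hgw lineEquation.apply_left hzw,
      hg.mem_affineSpan_of_mem_of_ne (hgq hzq) hgw lineEquation.apply_right hzw⟩

/-- Necessary and sufficient condition for segment intersection (Theorem 5): for
nondegenerate segments `[p₁,p₂]` and `[q₁,q₂]` in `ℝ²` whose four endpoints are
not all collinear, the segments have a common point if and only if the endpoints
of each segment lie on weakly opposite sides of the line through the other
segment. -/
theorem segment_intersection_iff
    (x₁ y₁ x₂ y₂ x₁' y₁' x₂' y₂' : ℝ)
    (hp : ((x₁, y₁) : ℝ × ℝ) ≠ (x₂, y₂))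
    (hq : ((x₁', y₁') : ℝ × ℝ) ≠ (x₂', y₂'))
    (hcol : ¬ Collinear ℝ ({(x₁, y₁), (x₂, y₂), (x₁', y₁'), (x₂', y₂')} : Set (ℝ × ℝ))) :
    (segment ℝ ((x₁, y₁) : ℝ × ℝ) (x₂, y₂) ∩
      segment ℝ ((x₁', y₁') : ℝ × ℝ) (x₂', y₂')).Nonempty ↔
    ((y₂ - y₁) * x₁' - (x₂ - x₁) * y₁' - x₁ * y₂ + y₁ * x₂) *
        ((y₂ - y₁) * x₂' - (x₂ - x₁) * y₂' - x₁ * y₂ + y₁ * x₂) ≤ 0 ∧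
      ((y₂' - y₁') * x₁ - (x₂' - x₁') * y₁ - x₁' * y₂' + y₁' * x₂') *
        ((y₂' - y₁') * x₂ - (x₂' - x₁') * y₂ - x₁' * y₂' + y₁' * x₂') ≤ 0 :=
  segment_inter_segment_nonempty_iff hp hq hcol
end
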